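/- arXiv:0905.4446 — 7 statements merged into one kernel-verified Lean document; each statement's English description precedes it below -/
import Mathlib

section
/- Let Ω ⊆ ℝ² be a bounded open connected set whose boundary ∂Ω is a finite disjoint union of simple closed C² curves, and let c be a Poisson solution on Ω whose extension to the closure of Ω is continuously differentiable. Set M = sup over the closure of Ω of ‖∇c‖. Then M = sup_{Q∈∂Ω} ‖∇c(Q)‖, and ‖∇c(x)‖ < M for every x ∈ Ω (the interior supremum is strictly smaller than the boundary supremum). -/
open Metric Set Filter
open scoped Matrix RealInnerProductSpace Topology

noncomputable section

/-- The Euclidean plane ℝ². -/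
abbrev E2 := EuclideanSpace ℝ (Fin 2)

/-- The Laplacian `c_xx + c_yy` of a function on the plane. -/
noncomputable def lap (c : E2 → ℝ) (p : E2) : ℝ :=
  ∑ i : Fin 2, fderiv ℝ (fun q => fderiv ℝ c q (EuclideanSpace.single i 1)) p
    (EuclideanSpace.single i 1)

/-- A Poisson solution on a bounded open set `Ω ⊆ ℝ²` (for fixed constants `K, D`):
continuous on the closure of `Ω`, twice continuously differentiable on `Ω`,
satisfying `Δc = -K/D` on `Ω` and `c = 0` on the boundary `∂Ω`. -/
structure IsPoissonSolution (K D : ℝ) (Ω : Set E2) (c : E2 → ℝ) : Prop where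
  contOn : ContinuousOn c (closure Ω)
  smooth : ContDiffOn ℝ 2 c Ω
  eqn : ∀ p ∈ Ω, lap c p = -(K / D)
  bdry : ∀ p ∈ frontier Ω, c p = 0

/-- A simple closed `C^k` curve in the plane: a `C^k`, 1-periodic, regular
parametrization which is injective on a period. -/
structure IsSimpleClosedCurve (k : ℕ∞) (γ : ℝ → E2) : Prop where
  smooth : ContDiff ℝ k γ
  periodic : Function.Periodic γ 1
  inj : Set.InjOn γ (Set.Ico (0 : ℝ) 1)
  regular : ∀ t, deriv γ t ≠ 0

/-- The signed curvature of a plane curve `γ` at parameter `t`: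
`(x'y'' - y'x'')/‖γ'‖³`. -/
noncomputable def curvature2D (γ : ℝ → E2) (t : ℝ) : ℝ :=
  (deriv (fun s => γ s 0) t * deriv (deriv fun s => γ s 1) t -
    deriv (fun s => γ s 1) t * deriv (deriv fun s => γ s 0) t) / ‖deriv γ t‖ ^ 3

/-- `Q` is a concave boundary point of `Ω` with tangent direction `T`: the tangent
line locally lies inside `Ω` except at the point of tangency itself. -/
def IsConcavePointAt (Ω : Set E2) (Q T : E2) : Prop :=
  ∃ ε > 0, ∀ s : ℝ, 0 < |s| → |s| < ε → Q + s • T ∈ Ω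

/-- A bounded open connected subset of the plane whose boundary is a finite disjoint
union of simple closed `C²` curves. -/
structure IsShape (Ω : Set E2) : Prop where
  isOpen : IsOpen Ω
  bounded : Bornology.IsBounded Ω
  connected : IsConnected Ω
  boundary_curves : ∃ (N : ℕ) (γ : Fin N → ℝ → E2),
    (∀ i, IsSimpleClosedCurve 2 (γ i)) ∧
    frontier Ω = ⋃ i, Set.range (γ i) ∧
    Pairwise fun i j => Disjoint (Set.range (γ i)) (Set.range (γ j))

/-- An `l`-regular shape: a bounded open connected set whose boundary is a finite
disjoint union of simple closed `C²` curves such that at every concave boundary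
point the radius of curvature is at least `l` (i.e. `l·|κ| ≤ 1`). -/
structure IsLRegularShape (l : ℝ) (Ω : Set E2) : Prop where
  isOpen : IsOpen Ω
  bounded : Bornology.IsBounded Ω
  connected : IsConnected Ω
  boundary_curves : ∃ (N : ℕ) (γ : Fin N → ℝ → E2),
    (∀ i, IsSimpleClosedCurve 2 (γ i)) ∧
    frontier Ω = ⋃ i, Set.range (γ i) ∧
    (Pairwise fun i j => Disjoint (Set.range (γ i)) (Set.range (γ j))) ∧
    ∀ i t, IsConcavePointAt Ω (γ i t) (deriv (γ i) t) → l * |curvature2D (γ i) t| ≤ 1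

/-!
Identify the plane with `ℂ` and put `k = -K/D`. Then `h = c - (k/4)|z|²` is harmonic, so
`F = h_x - i h_y` is holomorphic, and `G := c_x - i c_y = F + (k/2) z̄` has `|G| = |∇c|`.
If `|G|` had a local maximum at an interior point `z₀`, put `G₀ = G z₀`. The function
`Re (conj G₀ * G) ≤ |G₀| |G| ≤ |G₀|²` is maximal at `z₀`, and it is the real part of the
holomorphic function `conj G₀ * F + (k/2) G₀ z`; by the maximum modulus principle (applied to its
exponential) it is locally constant, and together with `|G| ≤ |G₀|` this forces `G = G₀` near
`z₀`. Then `z̄ = (2/k) (G₀ - F)` would be holomorphic, which it is not. Hence `|∇c| < M` in `Ω`;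
since `closure Ω` is compact the supremum `M` is attained, so it is attained on `∂Ω`.
-/

open Complex ComplexConjugate InnerProductSpace Laplacian

theorem Complex.not_differentiableAt_conj (z : ℂ) : ¬DifferentiableAt ℂ (conj : ℂ → ℂ) z := by
  intro h
  have hcr := (differentiableAt_complex_iff_differentiableAt_real.mp h).2
  rw [show (conj : ℂ → ℂ) = conjCLE from rfl, conjCLE.fderiv] at hcr
  norm_num [Complex.ext_iff] at hcr

theorem Complex.eventually_re_eq_of_isLocalMax_re {F : ℂ → ℂ} {z₀ : ℂ}
    (hF : ∀ᶠ z in 𝓝 z₀, DifferentiableAt ℂ F z) (hmax : IsLocalMax (fun z => (F z).re) z₀) :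
    ∀ᶠ z in 𝓝 z₀, (F z).re = (F z₀).re := by
  have hexp : IsLocalMax (norm ∘ fun z => exp (F z)) z₀ := by
    filter_upwards [hmax] with z hz
    simpa [Complex.norm_exp] using hz
  filter_upwards [eventually_eq_of_isLocalMax_norm (hF.mono fun z hz => hz.cexp) hexp] with z hz
  simpa [Complex.norm_exp] using congrArg norm hz

theorem Complex.eq_of_norm_le_of_re_conj_mul_eq {w v : ℂ} (hle : ‖w‖ ≤ ‖v‖)
    (hre : (conj v * w).re = ‖v‖ ^ 2) : w = v := by
  have hw : normSq w ≤ normSq v := by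
    simpa only [normSq_eq_norm_sq] using pow_le_pow_left₀ (norm_nonneg w) hle 2
  rw [← normSq_eq_norm_sq] at hre
  have h : normSq (w - v) ≤ 0 := by
    simp only [normSq_apply, sub_re, sub_im, mul_re, conj_re, conj_im] at hre hw ⊢
    nlinarith
  exact sub_eq_zero.1 (normSq_eq_zero.1 (h.antisymm (normSq_nonneg _)))

theorem Complex.not_isLocalMax_norm_sub_mul_conj {F : ℂ → ℂ} {z₀ a : ℂ}
    (hF : ∀ᶠ z in 𝓝 z₀, DifferentiableAt ℂ F z) (ha : a ≠ 0) :
    ¬IsLocalMax (fun z => ‖F z - a * conj z‖) z₀ := by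
  intro hmax
  set G := fun z => F z - a * conj z
  set G₀ := G z₀
  set H := fun z => conj G₀ * F z - conj a * G₀ * z
  have hH : ∀ z, (H z).re = (conj G₀ * G z).re := fun z => by
    simp only [H, G, mul_sub, sub_re, mul_re, mul_im, conj_re, conj_im]; ring
  have hHz₀ : (H z₀).re = ‖G₀‖ ^ 2 := by
    rw [hH, ← normSq_eq_norm_sq, normSq_apply]; simp [G₀, mul_re]
  have hHmax : IsLocalMax (fun z => (H z).re) z₀ := by
    filter_upwards [hmax] with z hz
    calc (H z).re = (conj G₀ * G z).re := hH z
      _ ≤ ‖conj G₀ * G z‖ := re_le_norm _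
      _ ≤ ‖G₀‖ ^ 2 := by rw [norm_mul, norm_conj, sq]; gcongr
      _ = (H z₀).re := hHz₀.symm
  have hHd : ∀ᶠ z in 𝓝 z₀, DifferentiableAt ℂ H z :=
    hF.mono fun z hz => (hz.const_mul _).sub (differentiableAt_id.const_mul _)
  have hG : ∀ᶠ z in 𝓝 z₀, G z = G₀ := by
    filter_upwards [hmax, eventually_re_eq_of_isLocalMax_re hHd hHmax] with z hz hre
    exact eq_of_norm_le_of_re_conj_mul_eq hz (by rw [← hH, hre, hHz₀])
  have hconj : (fun z => (F z - G₀) / a) =ᶠ[𝓝 z₀] conj := by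
    filter_upwards [hG] with z hz
    rw [← hz]; field_simp; ring
  exact not_differentiableAt_conj z₀
    (((hF.self_of_nhds.sub_const G₀).div_const a).congr_of_eventuallyEq hconj.symm)

theorem HasGradientWithinAt.hasGradientAt {E : Type*} [NormedAddCommGroup E]
    [InnerProductSpace ℝ E] [CompleteSpace E] {f : E → ℝ} {v x : E} {s : Set E}
    (hf : HasGradientWithinAt f v s x) (hs : s ∈ 𝓝 x) : HasGradientAt f v x :=
  hasGradientAt_iff_hasFDerivAt.2 ((hasGradientWithinAt_iff_hasFDerivWithinAt.1 hf).hasFDerivAt hs)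

theorem HasGradientAt.fderiv_one_sub_I_mul_fderiv_I {f : ℂ → ℝ} {v z : ℂ}
    (hf : HasGradientAt f v z) : fderiv ℝ f z 1 - I * fderiv ℝ f z I = conj v := by
  rw [hf.fderiv_apply, hf.fderiv_apply]
  apply Complex.ext <;> simp [Complex.inner]

section InnerProductSpace

variable {E E' : Type*} [NormedAddCommGroup E] [InnerProductSpace ℝ E] [FiniteDimensional ℝ E]
  [NormedAddCommGroup E'] [InnerProductSpace ℝ E'] [FiniteDimensional ℝ E']

theorem laplacian_comp_linearIsometryEquiv {F : Type*} [NormedAddCommGroup F] [NormedSpace ℝ F]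
    (f : E → F) (ι : E' ≃ₗᵢ[ℝ] E) (x : E') : Δ (f ∘ ι) x = Δ f (ι x) := by
  let b := stdOrthonormalBasis ℝ E'
  rw [laplacian_eq_iteratedFDeriv_orthonormalBasis _ b,
    laplacian_eq_iteratedFDeriv_orthonormalBasis _ (b.map ι)]
  have h := ι.toContinuousLinearEquiv.iteratedFDerivWithin_comp_right f uniqueDiffOn_univ
    (Set.mem_univ (ι x)) 2
  simp only [Set.preimage_univ, iteratedFDerivWithin_univ] at h
  refine Finset.sum_congr rfl fun i _ => ?_
  rw [show f ∘ ι = f ∘ ι.toContinuousLinearEquiv from rfl, h,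
    ContinuousMultilinearMap.compContinuousLinearMap_apply]
  congr 1
  ext j
  fin_cases j <;> rfl

theorem laplacian_norm_sq (x : E) :
    Δ (fun y : E => ‖y‖ ^ 2) x = 2 * Module.finrank ℝ E := by
  let b := stdOrthonormalBasis ℝ E
  have hd : fderiv ℝ (fun y : E => ‖y‖ ^ 2) = fun y => 2 • innerSL ℝ y := by
    ext1 y; exact (hasStrictFDerivAt_norm_sq y).hasFDerivAt.fderiv
  have hd2 : fderiv ℝ (fun y : E => 2 • innerSL ℝ y) x = 2 • innerSL ℝ :=
    (2 • innerSL ℝ : E →L[ℝ] E →L[ℝ] ℝ).fderiv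
  have hb : ∀ i, innerSL ℝ (b i) (b i) = 1 := fun i => by
    rw [innerSL_apply_apply, real_inner_self_eq_norm_sq, b.norm_eq_one, one_pow]
  rw [laplacian_eq_iteratedFDeriv_orthonormalBasis _ b]
  simp only [iteratedFDeriv_two_apply, hd, hd2]
  simp [hb, mul_comm]

theorem HasGradientAt.comp_linearIsometryEquiv {f : E → ℝ} {v : E} (ι : E' ≃ₗᵢ[ℝ] E) {x : E'}
    (hf : HasGradientAt f v (ι x)) : HasGradientAt (f ∘ ι) (ι.symm v) x := by
  rw [hasGradientAt_iff_hasFDerivAt] at hf ⊢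
  refine (hf.comp x ι.toContinuousLinearEquiv.hasFDerivAt).congr_fderiv ?_
  ext w
  simp [← ι.inner_map_map (ι.symm v)]

variable {Ω : Set E} {c : E → ℝ} {k : ℝ} (ι : ℂ ≃ₗᵢ[ℝ] E)

theorem harmonicAt_comp_sub_smul_norm_sq (hΩ : IsOpen Ω) (hc : ContDiffOn ℝ 2 c Ω)
    (hΔ : ∀ p ∈ Ω, Δ c p = k) {z : ℂ} (hz : ι z ∈ Ω) :
    HarmonicAt (c ∘ ι - (k / 4) • fun w : ℂ => ‖w‖ ^ 2) z := by
  have hcι : ∀ w, ι w ∈ Ω → ContDiffAt ℝ 2 (c ∘ ι) w := fun w hw =>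
    (hc.contDiffAt (hΩ.mem_nhds hw)).comp w ι.contDiff.contDiffAt
  have hq : ∀ w : ℂ, ContDiffAt ℝ 2 (fun w : ℂ => ‖w‖ ^ 2) w := fun w =>
    (contDiff_norm_sq ℝ).contDiffAt
  have hkq : ∀ w, ContDiffAt ℝ 2 ((k / 4) • fun w : ℂ => ‖w‖ ^ 2) w := fun w =>
    (hq w).const_smul (k / 4)
  refine ⟨(hcι z hz).sub (hkq z), ?_⟩
  filter_upwards [(hΩ.preimage ι.continuous).mem_nhds hz] with w hw
  rw [(hcι w hw).laplacian_sub (hkq w), laplacian_smul _ (hq w),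
    laplacian_comp_linearIsometryEquiv, hΔ _ hw, laplacian_norm_sq, Complex.finrank_real_complex]
  simp only [Pi.zero_apply, smul_eq_mul]
  ring

theorem hasGradientAt_comp_sub_smul_norm_sq {z : ℂ} (hc : DifferentiableAt ℝ c (ι z)) :
    HasGradientAt (c ∘ ι - (k / 4) • fun w : ℂ => ‖w‖ ^ 2)
      (ι.symm (gradient c (ι z)) - (k / 2 : ℝ) • z) z := by
  have hcι := hc.hasGradientAt.comp_linearIsometryEquiv ι
  rw [hasGradientAt_iff_hasFDerivAt] at hcι ⊢
  refine (hcι.sub ((hasStrictFDerivAt_norm_sq z).hasFDerivAt.const_smul (k / 4))).congr_fderiv ?_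
  ext w
  simp only [sub_apply, smul_apply, toDual_apply_apply,
    inner_sub_left, real_inner_smul_left, smul_eq_mul, innerSL_apply_apply, nsmul_eq_mul]
  ring

end InnerProductSpace

theorem lap_eq_laplacian {c : E2 → ℝ} {p : E2} (hc : ContDiffAt ℝ 2 c p) : lap c p = Δ c p := by
  have hd : DifferentiableAt ℝ (fderiv ℝ c) p :=
    (hc.fderiv_right (m := 1) le_rfl).differentiableAt one_ne_zero
  rw [laplacian_eq_iteratedFDeriv_orthonormalBasis _ (EuclideanSpace.basisFun (Fin 2) ℝ), lap]
  refine Finset.sum_congr rfl fun i _ => ?_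
  rw [iteratedFDeriv_two_apply, fderiv_clm_apply hd (differentiableAt_const _)]
  simp

theorem not_isLocalMax_norm_gradient_of_laplacian_eq {Ω : Set E2} (hΩ : IsOpen Ω) {c : E2 → ℝ}
    (hc : ContDiffOn ℝ 2 c Ω) {k : ℝ} (hk : k ≠ 0) (hΔ : ∀ p ∈ Ω, Δ c p = k)
    {x₀ : E2} (hx₀ : x₀ ∈ Ω) : ¬IsLocalMax (fun x => ‖gradient c x‖) x₀ := by
  intro hmax
  let ι : ℂ ≃ₗᵢ[ℝ] E2 := Complex.orthonormalBasisOneI.repr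
  let h : ℂ → ℝ := c ∘ ι - (k / 4) • fun w : ℂ => ‖w‖ ^ 2
  let F : ℂ → ℂ := fun z => fderiv ℝ h z 1 - I * fderiv ℝ h z I
  let U := ι ⁻¹' Ω
  have hU : U ∈ 𝓝 (ι.symm x₀) := (hΩ.preimage ι.continuous).mem_nhds (by simpa [U] using hx₀)
  have hF : ∀ᶠ z in 𝓝 (ι.symm x₀), DifferentiableAt ℂ F z := by
    filter_upwards [hU] with z hz
    exact HarmonicAt.differentiableAt_complex_partial
      (harmonicAt_comp_sub_smul_norm_sq ι hΩ hc hΔ hz)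
  have hnorm : ∀ z ∈ U, ‖F z - ((-(k / 2) : ℝ) : ℂ) * conj z‖ = ‖gradient c (ι z)‖ := by
    intro z hz
    have hcz := (hc.contDiffAt (hΩ.mem_nhds hz)).differentiableAt two_ne_zero
    rw [show F z = _ from (hasGradientAt_comp_sub_smul_norm_sq ι hcz).fderiv_one_sub_I_mul_fderiv_I]
    simp [Complex.real_smul, map_sub, map_ofNat]
  refine Complex.not_isLocalMax_norm_sub_mul_conj (a := ((-(k / 2) : ℝ) : ℂ)) hF
    (by simpa using hk) ?_
  rw [← ι.apply_symm_apply x₀] at hmax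
  filter_upwards [hmax.comp_continuous ι.continuous.continuousAt, hU] with z hz hzU
  simpa only [Function.comp_apply, hnorm z hzU, hnorm _ (mem_of_mem_nhds hU)] using hz

theorem IsLUB.image_frontier_of_lt {X : Type*} [TopologicalSpace X] {s : Set X}
    (hs : IsCompact (closure s)) (hne : s.Nonempty) {f : X → ℝ} (hf : ContinuousOn f (closure s))
    {M : ℝ} (hM : IsLUB (f '' closure s) M) (hlt : ∀ x ∈ interior s, f x < M) :
    IsLUB (f '' frontier s) M := by
  obtain ⟨p, hp, hpmax⟩ := hs.exists_isMaxOn hne.closure hf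
  have hpM : f p = M :=
    (show IsGreatest (f '' closure s) (f p) from
      ⟨⟨p, hp, rfl⟩, by rintro _ ⟨y, hy, rfl⟩; exact hpmax hy⟩).isLUB.unique hM
  have hpfr : p ∈ frontier s := ⟨hp, fun hpi => (hlt p hpi).ne hpM⟩
  exact ⟨fun y hy => hM.1 (image_mono frontier_subset_closure hy),
    fun b hb => hpM ▸ hb ⟨p, hpfr, rfl⟩⟩

/-- Decreasing Gradient: For a bounded open connected `Ω` with `C²`
boundary curves and a Poisson solution `c` whose extension to the closure is
continuously differentiable (with gradient `g`), the supremum `M` of `‖∇c‖` over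
the closure of `Ω` equals the supremum over the boundary `∂Ω`, and `‖∇c(x)‖ < M`
for every interior point `x ∈ Ω`. -/
theorem poisson_gradient_max_on_boundary (K D : ℝ) (hK : 0 < K) (hD : 0 < D)
    (Ω : Set E2) (hshape : IsShape Ω)
    (c : E2 → ℝ) (hc : IsPoissonSolution K D Ω c)
    (g : E2 → E2) (hg : ContinuousOn g (closure Ω))
    (hgrad : ∀ x ∈ closure Ω, HasGradientWithinAt c (g x) (closure Ω) x)
    (M : ℝ) (hM : IsLUB ((fun x => ‖g x‖) '' closure Ω) M) :
    IsLUB ((fun x => ‖g x‖) '' frontier Ω) M ∧ ∀ x ∈ Ω, ‖g x‖ < M := by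
  obtain ⟨hΩ, hΩb, hΩc, -⟩ := hshape
  have hg_eq : ∀ x ∈ Ω, gradient c x = g x := fun x hx =>
    ((hgrad x (subset_closure hx)).hasGradientAt
      (mem_of_superset (hΩ.mem_nhds hx) subset_closure)).gradient
  have hΔ : ∀ p ∈ Ω, Δ c p = -(K / D) := fun p hp => by
    rw [← lap_eq_laplacian (hc.smooth.contDiffAt (hΩ.mem_nhds hp)), hc.eqn p hp]
  have hlt : ∀ x ∈ Ω, ‖g x‖ < M := by
    intro x hx
    refine (hM.1 ⟨x, subset_closure hx, rfl⟩).lt_of_ne fun hxM => ?_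
    refine not_isLocalMax_norm_gradient_of_laplacian_eq hΩ hc.smooth
      (neg_ne_zero.2 (div_pos hK hD).ne') hΔ hx ?_
    filter_upwards [hΩ.mem_nhds hx] with y hy
    rw [hg_eq y hy, hg_eq x hx, show ‖g x‖ = M from hxM]
    exact hM.1 ⟨y, subset_closure hy, rfl⟩
  refine ⟨hM.image_frontier_of_lt hΩb.isCompact_closure hΩc.nonempty hg.norm ?_, hlt⟩
  rwa [hΩ.interior_eq]
end
end

section
/- Let Ω ⊆ ℝ² be a nonempty bounded open set and let c be a Poisson solution on Ω. Then for every P ∈ Ω, c(P) ≥ (K/(4D))·dist(P, ∂Ω)². -/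
open Metric Set Filter
open scoped Matrix RealInnerProductSpace Topology

noncomputable section

/-! For `0 ≤ a < K / (4D)` the function `v = c + a‖· - P‖²` satisfies `Δv = 4a - K/D < 0` on `Ω`,
so it has no interior local minimum, where every second directional derivative is `≥ 0`. Its
minimum over the compact set `closure Ω` is therefore attained at some `x ∈ ∂Ω`, and
`c P = v P ≥ v x = a‖x - P‖² ≥ a·dist(P, ∂Ω)²`. Letting `a → K / (4D)` gives the bound. -/

theorem IsLocalMin.deriv_deriv_nonneg {g : ℝ → ℝ} {t : ℝ} (hmin : IsLocalMin g t)
    (hg : ContinuousAt g t) : 0 ≤ deriv (deriv g) t := by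
  by_contra! hneg
  -- A strict inequality would make `t` a local maximum too, so `g` would be locally constant.
  have hmax := isLocalMax_of_deriv_deriv_neg hneg hmin.deriv_eq_zero hg
  have hconst : g =ᶠ[𝓝 t] fun _ => g t :=
    (hmin.and hmax).mono fun _ h => le_antisymm h.2 h.1
  have hderiv : deriv g =ᶠ[𝓝 t] fun _ => 0 := by
    simpa using hconst.deriv
  simp [hderiv.deriv_eq] at hneg

section SecondDirectionalDerivative

variable {E : Type*} [NormedAddCommGroup E] [NormedSpace ℝ E]

theorem IsLocalMin.fderiv_fderiv_apply_nonneg {f : E → ℝ} {x : E} (b : E)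
    (hmin : IsLocalMin f x) (hf : ∀ᶠ y in 𝓝 x, DifferentiableAt ℝ f y)
    (hf' : DifferentiableAt ℝ (fderiv ℝ f) x) :
    0 ≤ fderiv ℝ (fun y => fderiv ℝ f y b) x b := by
  set γ : ℝ → E := fun t => x + t • b
  have hγ : ∀ t, HasDerivAt γ b t := fun t =>
    (((hasDerivAt_id' t).smul_const b).const_add x).congr_deriv (one_smul ℝ b)
  have hγ0 : γ 0 = x := by simp [γ]
  have hγx : Tendsto γ (𝓝 0) (𝓝 x) := hγ0 ▸ (hγ 0).continuousAt.tendsto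
  have hderiv : deriv (f ∘ γ) =ᶠ[𝓝 0] fun t => fderiv ℝ f (γ t) b :=
    (hγx.eventually hf).mono fun t ht => (ht.hasFDerivAt.comp_hasDerivAt t (hγ t)).deriv
  have hsecond : HasDerivAt (fun t => fderiv ℝ f (γ t) b)
      (fderiv ℝ (fun y => fderiv ℝ f y b) x b) 0 := by
    have hd : HasFDerivAt (fun y => fderiv ℝ f y b)
        (fderiv ℝ (fun y => fderiv ℝ f y b) x) (γ 0) :=
      hγ0 ▸ (hf'.clm_apply (differentiableAt_const b)).hasFDerivAt
    exact hd.comp_hasDerivAt 0 (hγ 0)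
  have hmin' : IsLocalMin (f ∘ γ) 0 := (hγ0 ▸ hmin).comp_continuous (hγ 0).continuousAt
  calc 0 ≤ deriv (deriv (f ∘ γ)) 0 :=
        hmin'.deriv_deriv_nonneg ((hγ0 ▸ hf.self_of_nhds.continuousAt).comp (hγ 0).continuousAt)
    _ = _ := hderiv.deriv_eq.trans hsecond.deriv

variable {F : Type*} [NormedAddCommGroup F] [NormedSpace ℝ F]

theorem fderiv_fderiv_apply_add {f g : E → F} {x : E} (hf : ContDiffAt ℝ 2 f x)
    (hg : ContDiffAt ℝ 2 g x) (b : E) :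
    fderiv ℝ (fun y => fderiv ℝ (f + g) y b) x b =
      fderiv ℝ (fun y => fderiv ℝ f y b) x b + fderiv ℝ (fun y => fderiv ℝ g y b) x b := by
  have hsum : (fun y => fderiv ℝ (f + g) y b) =ᶠ[𝓝 x]
      fun y => fderiv ℝ f y b + fderiv ℝ g y b :=
    ((hf.eventually (by simp)).and (hg.eventually (by simp))).mono fun y hy => by
      simp only [fderiv_add (hy.1.differentiableAt two_ne_zero)
        (hy.2.differentiableAt two_ne_zero), add_apply]
  have hdiff : ∀ {h : E → F}, ContDiffAt ℝ 2 h x →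
      DifferentiableAt ℝ (fun y => fderiv ℝ h y b) x := fun hh =>
    ((hh.fderiv_right le_rfl).differentiableAt one_ne_zero).clm_apply (differentiableAt_const b)
  rw [hsum.fderiv_eq, fderiv_fun_add (hdiff hf) (hdiff hg)]
  rfl

end SecondDirectionalDerivative

section InnerProductSpace

variable {E : Type*} [NormedAddCommGroup E] [InnerProductSpace ℝ E]

theorem fderiv_fderiv_apply_const_mul_norm_sub_sq (a : ℝ) (P x b : E) :
    fderiv ℝ (fun y => fderiv ℝ (fun q => a * ‖q - P‖ ^ 2) y b) x b = 2 * a * ‖b‖ ^ 2 := by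
  have hfirst : (fun y => fderiv ℝ (fun q => a * ‖q - P‖ ^ 2) y b) =
      fun y => 2 * a * ⟪b, y - P⟫ := by
    ext y
    rw [((hasFDerivAt_sub_const P).norm_sq.const_mul a).fderiv]
    simp [real_inner_comm b, inner_sub_right]
    ring
  have hsecond : HasFDerivAt (fun y => 2 * a * ⟪b, y - P⟫) ((2 * a) • innerSL ℝ b) x :=
    (((innerSL ℝ b).hasFDerivAt.comp x (hasFDerivAt_sub_const P))).const_mul (2 * a)
  rw [hfirst, hsecond.fderiv]
  simp

end InnerProductSpace

theorem lap_nonneg_of_isLocalMin {c : E2 → ℝ} {x : E2} (hmin : IsLocalMin c x)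
    (hc : ContDiffAt ℝ 2 c x) : 0 ≤ lap c x :=
  Finset.sum_nonneg fun _ _ => hmin.fderiv_fderiv_apply_nonneg _
    ((hc.eventually (by simp)).mono fun _ hy => hy.differentiableAt two_ne_zero)
    ((hc.fderiv_right le_rfl).differentiableAt one_ne_zero)

theorem lap_add {f g : E2 → ℝ} {x : E2} (hf : ContDiffAt ℝ 2 f x) (hg : ContDiffAt ℝ 2 g x) :
    lap (f + g) x = lap f x + lap g x := by
  simp only [lap, fderiv_fderiv_apply_add hf hg, Finset.sum_add_distrib]

theorem lap_const_mul_norm_sub_sq (a : ℝ) (P x : E2) :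
    lap (fun q => a * ‖q - P‖ ^ 2) x = 4 * a := by
  simp [lap, fderiv_fderiv_apply_const_mul_norm_sub_sq]
  ring

theorem exists_isMinOn_frontier_of_lap_neg {Ω : Set E2} {v : E2 → ℝ} (hΩ : IsOpen Ω)
    (hΩb : Bornology.IsBounded Ω) (hne : Ω.Nonempty) (hcont : ContinuousOn v (closure Ω))
    (hsmooth : ContDiffOn ℝ 2 v Ω) (hlap : ∀ x ∈ Ω, lap v x < 0) :
    ∃ x ∈ frontier Ω, IsMinOn v (closure Ω) x := by
  obtain ⟨x, hx, hmin⟩ :=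
    hΩb.isCompact_closure.exists_isMinOn (hne.mono subset_closure) hcont
  refine ⟨x, hΩ.frontier_eq ▸ ⟨hx, fun hxΩ => ?_⟩, hmin⟩
  have hloc : IsLocalMin v x :=
    hmin.isLocalMin (mem_of_superset (hΩ.mem_nhds hxΩ) subset_closure)
  exact (hlap x hxΩ).not_ge
    (lap_nonneg_of_isLocalMin hloc (hsmooth.contDiffAt (hΩ.mem_nhds hxΩ)))

theorem IsPoissonSolution.mul_infDist_frontier_sq_le {K D a : ℝ} {Ω : Set E2} {c : E2 → ℝ}
    (hc : IsPoissonSolution K D Ω c) (hΩ : IsOpen Ω) (hΩb : Bornology.IsBounded Ω)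
    (ha : 0 ≤ a) (haK : 4 * a < K / D) {P : E2} (hP : P ∈ Ω) :
    a * infDist P (frontier Ω) ^ 2 ≤ c P := by
  set ψ : E2 → ℝ := fun q => a * ‖q - P‖ ^ 2
  have hψ : ContDiff ℝ 2 ψ := contDiff_const.mul ((contDiff_id.sub contDiff_const).norm_sq ℝ)
  have hlap : ∀ x ∈ Ω, lap (c + ψ) x < 0 := fun x hx => by
    rw [lap_add (hc.smooth.contDiffAt (hΩ.mem_nhds hx)) hψ.contDiffAt, hc.eqn x hx,
      lap_const_mul_norm_sub_sq]
    linarith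
  obtain ⟨x, hx, hmin⟩ := exists_isMinOn_frontier_of_lap_neg hΩ hΩb ⟨P, hP⟩
    (hc.contOn.add hψ.continuous.continuousOn) (hc.smooth.add hψ.contDiffOn) hlap
  calc a * infDist P (frontier Ω) ^ 2 ≤ a * ‖x - P‖ ^ 2 := by
        rw [← dist_eq_norm, dist_comm]
        exact mul_le_mul_of_nonneg_left
          (pow_le_pow_left₀ infDist_nonneg (infDist_le_dist_of_mem hx) 2) ha
    _ = (c + ψ) x := by simp [ψ, hc.bdry x hx]
    _ ≤ (c + ψ) P := hmin (subset_closure hP)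
    _ = c P := by simp [ψ]

theorem poisson_lower_bound_general (K D : ℝ) (hK : 0 < K) (hD : 0 < D)
    (Ω : Set E2) (hΩ : IsOpen Ω) (hΩb : Bornology.IsBounded Ω)
    (c : E2 → ℝ) (hc : IsPoissonSolution K D Ω c) :
    ∀ P ∈ Ω, K / (4 * D) * Metric.infDist P (frontier Ω) ^ 2 ≤ c P := by
  intro P hP
  have hM : 0 < K / (4 * D) := by positivity
  have hMK : 4 * (K / (4 * D)) = K / D := by field_simp
  have hlim : Tendsto (fun a => a * infDist P (frontier Ω) ^ 2) (𝓝[<] (K / (4 * D)))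
      (𝓝 (K / (4 * D) * infDist P (frontier Ω) ^ 2)) :=
    ((continuous_id.mul continuous_const).tendsto _).mono_left nhdsWithin_le_nhds
  refine le_of_tendsto hlim ?_
  filter_upwards [Ioo_mem_nhdsLT hM] with a ha
  exact hc.mul_infDist_frontier_sq_le hΩ hΩb ha.1.le (by linarith [ha.2]) hP

/-- A Poisson solution on a nonempty bounded open set satisfies the
lower bound `c(P) ≥ (K/(4D))·dist(P, ∂Ω)²` at every `P ∈ Ω`. -/
theorem poisson_lower_bound (K D : ℝ) (hK : 0 < K) (hD : 0 < D)
    (Ω : Set E2) (hΩ : IsOpen Ω) (hΩb : Bornology.IsBounded Ω) (hne : Ω.Nonempty)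
    (c : E2 → ℝ) (hc : IsPoissonSolution K D Ω c) :
    ∀ P ∈ Ω, K / (4 * D) * Metric.infDist P (frontier Ω) ^ 2 ≤ c P :=
  poisson_lower_bound_general K D hK hD Ω hΩ hΩb c hc
end
end

section
/- Fix real constants K > 0, D > 0 and parameters l > 0, L > 0. The radial function c(x, y) = c_D(√(x² + y²); l, L) satisfies: (i) Δc = −K/D at every point of the open annulus l < √(x² + y²) < l + L; (ii) c = 0 on the inner circle √(x² + y²) = l; (iii) the radial derivative d/dr [c_D(r; l, L)] vanishes at r = l + L, so ∇c = 0 on the outer circle √(x² + y²) = l + L; and (iv) c_D(r; l, L) is nonnegative and nondecreasing in r on the interval [l, l + L]. -/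
open Metric Set Filter
open scoped Matrix RealInnerProductSpace Topology

noncomputable section

/-- The "open doughnut" radial comparison function
`c_D(r; l, L) = (K/D)·((l² − r²)/4 + (1/2)·ln(r/l)·(l+L)²)`. -/
noncomputable def cD (K D l L r : ℝ) : ℝ :=
  K / D * ((l ^ 2 - r ^ 2) / 4 + 1 / 2 * Real.log (r / l) * (l + L) ^ 2)

/-! Writing `c p = g (‖p‖²)`, the chain rule gives `Δc = 4 g'(s) + 4 s g''(s)` at `s = ‖p‖²`. For
`g(s) = c_D(√s) = (K/D)((l² - s)/4 + (l+L)²/4 · log (s/l²))` this is `-K/D` identically. Moreover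
`g'(s) = (K/D)((l+L)²/(4s) - 1/4)` vanishes at `s = (l+L)²`, which kills the gradient on the outer
circle, and is nonnegative for `0 < s ≤ (l+L)²`, which gives monotonicity on `[l, l+L]`;
nonnegativity then follows from `c_D(l) = 0`. -/

section RadialSquare

variable {F : Type*} [NormedAddCommGroup F] [InnerProductSpace ℝ F] {g g' : ℝ → ℝ} {g'' : ℝ}

theorem HasDerivAt.hasFDerivAt_comp_norm_sq {x : F} {d : ℝ} (hg : HasDerivAt g d (‖x‖ ^ 2)) :
    HasFDerivAt (fun y => g (‖y‖ ^ 2)) ((2 * d) • innerSL ℝ x) x := by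
  refine (hg.comp_hasFDerivAt x (hasStrictFDerivAt_norm_sq x).hasFDerivAt).congr_fderiv ?_
  ext v
  simp
  ring

theorem fderiv_comp_norm_sq_apply {x : F} {d : ℝ} (hg : HasDerivAt g d (‖x‖ ^ 2)) (v : F) :
    fderiv ℝ (fun y => g (‖y‖ ^ 2)) x v = 2 * d * ⟪x, v⟫ := by
  simp [hg.hasFDerivAt_comp_norm_sq.fderiv]

theorem fderiv_fderiv_comp_norm_sq_apply {x : F}
    (hg : ∀ᶠ s in 𝓝 (‖x‖ ^ 2), HasDerivAt g (g' s) s) (hg' : HasDerivAt g' g'' (‖x‖ ^ 2))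
    (v w : F) :
    fderiv ℝ (fun y => fderiv ℝ (fun z => g (‖z‖ ^ 2)) y v) x w =
      2 * g' (‖x‖ ^ 2) * ⟪v, w⟫ + 4 * g'' * ⟪x, v⟫ * ⟪x, w⟫ := by
  have hnear : ∀ᶠ y in 𝓝 x, HasDerivAt g (g' (‖y‖ ^ 2)) (‖y‖ ^ 2) :=
    ((continuous_norm.pow 2).tendsto x).eventually hg
  have hfirst : (fun y => fderiv ℝ (fun z => g (‖z‖ ^ 2)) y v) =ᶠ[𝓝 x]
      fun y => 2 * g' (‖y‖ ^ 2) * ⟪v, y⟫ :=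
    hnear.mono fun y hy => (fderiv_comp_norm_sq_apply hy v).trans (by rw [real_inner_comm])
  have hderiv : HasFDerivAt (fun y => 2 * g' (‖y‖ ^ 2) * ⟪v, y⟫) _ x :=
    (hg'.hasFDerivAt_comp_norm_sq.const_mul 2).fun_mul (innerSL ℝ v).hasFDerivAt
  rw [hfirst.fderiv_eq, hderiv.fderiv]
  simp [real_inner_comm]
  ring

theorem lap_comp_norm_sq {p : E2} (hg : ∀ᶠ s in 𝓝 (‖p‖ ^ 2), HasDerivAt g (g' s) s)
    (hg' : HasDerivAt g' g'' (‖p‖ ^ 2)) :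
    lap (fun q => g (‖q‖ ^ 2)) p = 4 * g' (‖p‖ ^ 2) + 4 * ‖p‖ ^ 2 * g'' := by
  rw [lap, Fin.sum_univ_two, fderiv_fderiv_comp_norm_sq_apply hg hg',
    fderiv_fderiv_comp_norm_sq_apply hg hg', EuclideanSpace.real_norm_sq_eq, Fin.sum_univ_two]
  simp [EuclideanSpace.inner_single_right]
  ring

end RadialSquare

namespace OpenDoughnut

variable (K D l L : ℝ)

def profile (s : ℝ) : ℝ :=
  K / D * ((l ^ 2 - s) / 4 + (l + L) ^ 2 / 4 * Real.log (s / l ^ 2))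

def profileDeriv (s : ℝ) : ℝ :=
  K / D * ((l + L) ^ 2 / 4 * s⁻¹ - 1 / 4)

theorem cD_eq_profile (r : ℝ) : cD K D l L r = profile K D l L (r ^ 2) := by
  rw [cD, profile, ← div_pow, Real.log_pow]
  push_cast
  ring

variable {K D l L}

theorem cD_self (hl : l ≠ 0) : cD K D l L l = 0 := by
  simp [cD, div_self hl]

theorem hasDerivAt_profile {s : ℝ} (hl : l ≠ 0) (hs : s ≠ 0) :
    HasDerivAt (profile K D l L) (profileDeriv K D l L s) s := by
  have hlog : HasDerivAt (fun s => Real.log (s / l ^ 2)) s⁻¹ s :=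
    (((hasDerivAt_id' s).div_const (l ^ 2)).log (by positivity)).congr_deriv (by field_simp)
  refine ((((hasDerivAt_id' s).const_sub (l ^ 2)).div_const 4).fun_add
    (hlog.const_mul ((l + L) ^ 2 / 4))).const_mul (K / D) |>.congr_deriv ?_
  rw [profileDeriv]
  ring

theorem hasDerivAt_profileDeriv {s : ℝ} (hs : s ≠ 0) :
    HasDerivAt (profileDeriv K D l L) (-(K / D) * (l + L) ^ 2 / (4 * s ^ 2)) s := by
  refine (((hasDerivAt_inv hs).const_mul ((l + L) ^ 2 / 4)).sub_const (1 / 4)).const_mul (K / D)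
    |>.congr_deriv ?_
  ring

theorem profile_radial_laplacian {s : ℝ} (hs : s ≠ 0) :
    4 * profileDeriv K D l L s + 4 * s * (-(K / D) * (l + L) ^ 2 / (4 * s ^ 2)) = -(K / D) := by
  simp only [profileDeriv]
  field_simp
  ring

theorem profileDeriv_outer (hlL : l + L ≠ 0) : profileDeriv K D l L ((l + L) ^ 2) = 0 := by
  simp [profileDeriv, field]

theorem profileDeriv_nonneg (hKD : 0 ≤ K / D) {s : ℝ} (hs : 0 < s) (hsL : s ≤ (l + L) ^ 2) :
    0 ≤ profileDeriv K D l L s := by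
  refine mul_nonneg hKD (sub_nonneg.2 ?_)
  rw [← div_eq_mul_inv, le_div_iff₀ hs]
  linarith

theorem hasDerivAt_cD {r : ℝ} (hl : l ≠ 0) (hr : r ≠ 0) :
    HasDerivAt (cD K D l L) (profileDeriv K D l L (r ^ 2) * (2 * r)) r := by
  have hsq : HasDerivAt (fun x : ℝ => x ^ 2) (2 * r) r := by simpa using hasDerivAt_pow 2 r
  rw [funext (cD_eq_profile K D l L)]
  exact (hasDerivAt_profile hl (pow_ne_zero 2 hr)).comp (h := fun x : ℝ => x ^ 2) r hsq

theorem monotoneOn_cD (hKD : 0 ≤ K / D) (hl : 0 < l) :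
    MonotoneOn (cD K D l L) (Icc l (l + L)) := by
  have hderiv : ∀ r ∈ Icc l (l + L), HasDerivAt (cD K D l L) _ r := fun r hr =>
    hasDerivAt_cD hl.ne' (hl.trans_le hr.1).ne'
  refine monotoneOn_of_hasDerivWithinAt_nonneg (convex_Icc _ _)
    (fun r hr => (hderiv r hr).continuousAt.continuousWithinAt)
    (fun r hr => (hderiv r (interior_subset hr)).hasDerivWithinAt) fun r hr => ?_
  rw [interior_Icc] at hr
  have hr0 : 0 < r := hl.trans hr.1
  exact mul_nonneg (profileDeriv_nonneg hKD (by positivity) (by nlinarith [hr.2])) (by positivity)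

end OpenDoughnut

open OpenDoughnut

/-- Open Doughnut Lemma: The radial function
`c(x,y) = c_D(√(x²+y²); l, L)` satisfies `Δc = −K/D` on the open annulus
`l < √(x²+y²) < l + L`, vanishes on the inner circle, has vanishing radial
derivative (hence vanishing gradient) on the outer circle, and `c_D(·; l, L)` is
nonnegative and nondecreasing on `[l, l + L]`. -/
theorem open_doughnut (K D l L : ℝ) (hK : 0 < K) (hD : 0 < D) (hl : 0 < l) (hL : 0 < L)
    (c : E2 → ℝ) (hcdef : c = fun p => cD K D l L ‖p‖) :
    (∀ p : E2, l < ‖p‖ → ‖p‖ < l + L → lap c p = -(K / D)) ∧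
      (∀ p : E2, ‖p‖ = l → c p = 0) ∧
      (deriv (fun r => cD K D l L r) (l + L) = 0 ∧
        ∀ p : E2, ‖p‖ = l + L → gradient c p = 0) ∧
      ((∀ r ∈ Set.Icc l (l + L), 0 ≤ cD K D l L r) ∧
        MonotoneOn (fun r => cD K D l L r) (Set.Icc l (l + L))) := by
  have hlL : l + L ≠ 0 := by positivity
  have hc : c = fun p => profile K D l L (‖p‖ ^ 2) := hcdef ▸ funext fun p => cD_eq_profile ..
  have hprofile : ∀ s, 0 < s → HasDerivAt (profile K D l L) (profileDeriv K D l L s) s :=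
    fun s hs => hasDerivAt_profile hl.ne' hs.ne'
  have hcD_l : cD K D l L l = 0 := cD_self hl.ne'
  have hmono := monotoneOn_cD (L := L) (div_nonneg hK.le hD.le) hl
  refine ⟨fun p hlp _ => ?_, fun p hp => by simp [hcdef, hp, hcD_l], ⟨?_, fun p hp => ?_⟩,
    fun r hr => hcD_l ▸ hmono (left_mem_Icc.2 (by linarith)) hr hr.1, hmono⟩
  · have hp : 0 < ‖p‖ ^ 2 := by have := hl.trans hlp; positivity
    rw [hc, lap_comp_norm_sq ((eventually_gt_nhds hp).mono hprofile)
      (hasDerivAt_profileDeriv hp.ne'), profile_radial_laplacian hp.ne']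
  · rw [(hasDerivAt_cD hl.ne' hlL).deriv, profileDeriv_outer hlL, zero_mul]
  · have hp2 : 0 < ‖p‖ ^ 2 := by rw [hp]; positivity
    rw [gradient, hc, (hprofile _ hp2).hasFDerivAt_comp_norm_sq.fderiv, hp, profileDeriv_outer hlL]
    simp
end
end

section
/- Fix real constants K > 0, D > 0 and parameters l > 0, L > 0. The function u(x, y) = c_D(l + L − √(x² + y²); l, L) satisfies Δu(x, y) < −K/D at every point (x, y) with 0 < √(x² + y²) < l + L. -/
open Metric Set Filter
open scoped Matrix RealInnerProductSpace Topology

noncomputable section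

/-!
A radial function `u = f ∘ ‖·‖` on the punctured plane has `Δu = f''(r) + f'(r)/r`. Here
`f(t) = c_D(l + L - t)`, so with `s = l + L - r > 0` we get `Δu = c_D''(s) - c_D'(s)/r`, where
`c_D'(s) = (K/D)((l+L)²/(2s) - s/2)` and `c_D''(s) = -(K/D)((l+L)²/(2s²) + 1/2)`.
Substituting `l + L = s + r` gives `Δu + K/D = -(K/D)(s + r)(2s + r)/(2s²) < 0`.
-/

section RadialCalculus

variable {F : Type*} [NormedAddCommGroup F] [InnerProductSpace ℝ F]

theorem hasFDerivAt_norm_of_ne_zero {x : F} (hx : x ≠ 0) :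
    HasFDerivAt (‖·‖) (‖x‖⁻¹ • innerSL ℝ x) x := by
  have hsq : ‖x‖ ^ 2 ≠ 0 := by positivity
  have h := (hasStrictFDerivAt_norm_sq x).hasFDerivAt.sqrt hsq
  simp only [Real.sqrt_sq (norm_nonneg _)] at h
  convert h using 1
  ext v
  simp only [smul_apply, coe_innerSL_apply, smul_eq_mul, one_div, mul_inv_rev, nsmul_eq_mul,
    Nat.cast_ofNat]
  field_simp

theorem HasDerivAt.comp_norm {f : ℝ → ℝ} {f' : ℝ} {x : F} (hx : x ≠ 0)
    (hf : HasDerivAt f f' ‖x‖) :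
    HasFDerivAt (fun y => f ‖y‖) ((f' / ‖x‖) • innerSL ℝ x) x := by
  rw [div_eq_mul_inv, ← smul_smul]
  exact hf.comp_hasFDerivAt x (hasFDerivAt_norm_of_ne_zero hx)

end RadialCalculus

section RadialLaplacian

variable {ι : Type*} [Fintype ι] [DecidableEq ι]

theorem fderiv_fderiv_comp_norm_single {f f' : ℝ → ℝ} {f'' : ℝ} {p : EuclideanSpace ℝ ι}
    (hp : p ≠ 0) (hf : ∀ᶠ t in 𝓝 ‖p‖, HasDerivAt f (f' t) t) (hf' : HasDerivAt f' f'' ‖p‖)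
    (i : ι) :
    fderiv ℝ (fun q => fderiv ℝ (fun y => f ‖y‖) q (EuclideanSpace.single i 1)) p
        (EuclideanSpace.single i 1)
      = f' ‖p‖ / ‖p‖ + (f'' - f' ‖p‖ / ‖p‖) * (p i / ‖p‖) ^ 2 := by
  have hnorm : ‖p‖ ≠ 0 := norm_ne_zero_iff.2 hp
  have hpartial : (fun q => fderiv ℝ (fun y => f ‖y‖) q (EuclideanSpace.single i 1))
      =ᶠ[𝓝 p] fun q => f' ‖q‖ / ‖q‖ * q i := by
    have hq : ∀ᶠ q in 𝓝 p, q ≠ 0 := eventually_ne_nhds hp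
    filter_upwards [hq, continuous_norm.continuousAt.eventually hf] with q hq hfq
    rw [(hfq.comp_norm hq).fderiv]
    simp [EuclideanSpace.inner_single_right]
  have hquot : HasDerivAt (fun t => f' t / t) ((f'' * ‖p‖ - f' ‖p‖ * 1) / ‖p‖ ^ 2) ‖p‖ :=
    hf'.div (hasDerivAt_id _) hnorm
  have hcoord : HasFDerivAt (fun q : EuclideanSpace ℝ ι => q i)
      (EuclideanSpace.proj i (𝕜 := ℝ)) p :=
    (EuclideanSpace.proj i (𝕜 := ℝ)).hasFDerivAt
  have h : HasFDerivAt (fun q => f' ‖q‖ / ‖q‖ * q i) _ p := (hquot.comp_norm hp).mul hcoord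
  rw [hpartial.fderiv_eq, h.fderiv]
  simp only [mul_one, add_apply, smul_apply, PiLp.proj_apply, PiLp.single_eq_same, smul_eq_mul,
    coe_innerSL_apply, EuclideanSpace.inner_single_right, Real.ringHom_apply, one_mul]
  field_simp

end RadialLaplacian

theorem lap_comp_norm {f f' : ℝ → ℝ} {f'' : ℝ} {p : E2} (hp : p ≠ 0)
    (hf : ∀ᶠ t in 𝓝 ‖p‖, HasDerivAt f (f' t) t) (hf' : HasDerivAt f' f'' ‖p‖) :
    lap (fun q => f ‖q‖) p = f'' + f' ‖p‖ / ‖p‖ := by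
  have hnorm : ‖p‖ ≠ 0 := norm_ne_zero_iff.2 hp
  have hsum : p 0 ^ 2 + p 1 ^ 2 = ‖p‖ ^ 2 := by
    simp [EuclideanSpace.real_norm_sq_eq, Fin.sum_univ_two]
  simp only [lap, Fin.sum_univ_two, fderiv_fderiv_comp_norm_single hp hf hf']
  field_simp
  linear_combination (f'' * ‖p‖ - f' ‖p‖) * hsum

section Doughnut

variable (K D l L : ℝ)

def cDDeriv (r : ℝ) : ℝ := K / D * ((l + L) ^ 2 / (2 * r) - r / 2)

def cDDeriv2 (r : ℝ) : ℝ := -(K / D) * ((l + L) ^ 2 / (2 * r ^ 2) + 1 / 2)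

variable {K D l L}

theorem hasDerivAt_cD (hl : l ≠ 0) {r : ℝ} (hr : r ≠ 0) :
    HasDerivAt (cD K D l L) (cDDeriv K D l L r) r := by
  have hlog : HasDerivAt (fun r => Real.log (r / l)) (1 / l / (r / l)) r :=
    ((hasDerivAt_id r).div_const l).log (div_ne_zero hr hl)
  have h := ((((hasDerivAt_pow 2 r).const_sub (l ^ 2)).div_const 4).add
    ((hlog.const_mul (1 / 2)).mul_const ((l + L) ^ 2))).const_mul (K / D)
  refine h.congr_deriv ?_
  unfold cDDeriv
  field_simp
  ring

theorem hasDerivAt_cDDeriv {r : ℝ} (hr : r ≠ 0) :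
    HasDerivAt (cDDeriv K D l L) (cDDeriv2 K D l L r) r := by
  have h := (((hasDerivAt_const r ((l + L) ^ 2)).div ((hasDerivAt_id' r).const_mul 2)
    (mul_ne_zero two_ne_zero hr)).sub ((hasDerivAt_id' r).div_const 2)).const_mul (K / D)
  refine h.congr_deriv ?_
  unfold cDDeriv2
  field_simp
  ring

theorem cDDeriv2_sub_cDDeriv_div_lt (hKD : 0 < K / D) {s r : ℝ} (hs : 0 < s) (hr : 0 < r)
    (hsr : s + r = l + L) :
    cDDeriv2 K D l L s - cDDeriv K D l L s / r < -(K / D) := by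
  have hdefect : cDDeriv2 K D l L s - cDDeriv K D l L s / r + K / D
      = -(K / D) * ((s + r) * (2 * s + r) / (2 * s ^ 2)) := by
    unfold cDDeriv cDDeriv2
    rw [← hsr]
    field_simp
    ring
  have : 0 < K / D * ((s + r) * (2 * s + r) / (2 * s ^ 2)) := by positivity
  linarith

end Doughnut

theorem cD_reflected_superharmonic_general (K D l L : ℝ) (hK : 0 < K) (hD : 0 < D)
    (hl : 0 < l)
    (u : E2 → ℝ) (hudef : u = fun p => cD K D l L (l + L - ‖p‖)) :
    ∀ p : E2, 0 < ‖p‖ → ‖p‖ < l + L → lap u p < -(K / D) := by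
  intro p hp hpA
  subst hudef
  have hf : ∀ᶠ t in 𝓝 ‖p‖,
      HasDerivAt (fun t => cD K D l L (l + L - t)) (-cDDeriv K D l L (l + L - t)) t := by
    filter_upwards [eventually_lt_nhds hpA] with t ht
    exact (hasDerivAt_cD hl.ne' (sub_pos.2 ht).ne').comp_const_sub (l + L) t
  have hf' : HasDerivAt (fun t => -cDDeriv K D l L (l + L - t))
      (cDDeriv2 K D l L (l + L - ‖p‖)) ‖p‖ :=
    ((hasDerivAt_cDDeriv (sub_pos.2 hpA).ne').comp_const_sub (l + L) ‖p‖).neg.congr_deriv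
      (neg_neg _)
  rw [lap_comp_norm (norm_pos_iff.1 hp) hf hf', neg_div, ← sub_eq_add_neg]
  exact cDDeriv2_sub_cDDeriv_div_lt (div_pos hK hD) (sub_pos.2 hpA) hp (sub_add_cancel _ _)

/-- The function `u(x,y) = c_D(l + L − √(x²+y²); l, L)` satisfies
`Δu < −K/D` at every point with `0 < √(x²+y²) < l + L`. -/
theorem cD_reflected_superharmonic (K D l L : ℝ) (hK : 0 < K) (hD : 0 < D)
    (hl : 0 < l) (hL : 0 < L)
    (u : E2 → ℝ) (hudef : u = fun p => cD K D l L (l + L - ‖p‖)) :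
    ∀ p : E2, 0 < ‖p‖ → ‖p‖ < l + L → lap u p < -(K / D) :=
  cD_reflected_superharmonic_general K D l L hK hD hl u hudef
end
end

section
/- Let n ≥ 1 and let W be an n×n real symmetric matrix with nonnegative entries and zero diagonal such that the weighted graph determined by W is connected, and let L(W) = diag(d) − W be the weighted graph Laplacian, where d_i = Σ_j W_{ij}. Let D be an n×n diagonal matrix with nonnegative diagonal entries, at least one of which is strictly positive. Then L(W) + D is symmetric positive definite; in particular it is invertible and all of its eigenvalues are strictly positive. -/
open scoped Matrix

noncomputable section

/-- The weighted graph determined by a symmetric nonnegative weight matrix `W` is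
connected: any two distinct vertices are joined by a path of positive-weight edges. -/
def WeightConnected {n : ℕ} (W : Matrix (Fin n) (Fin n) ℝ) : Prop :=
  ∀ i j : Fin n, i ≠ j → ∃ (k : ℕ) (v : Fin (k + 1) → Fin n),
    v 0 = i ∧ v (Fin.last k) = j ∧ ∀ t : Fin k, 0 < W (t.castSucc |> v) (t.succ |> v)

/-- The weighted graph Laplacian `L(W) = diag(d) − W`, `d_i = Σ_j W_{ij}`. -/
def graphLaplacian {n : ℕ} (W : Matrix (Fin n) (Fin n) ℝ) : Matrix (Fin n) (Fin n) ℝ :=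
  Matrix.diagonal (fun i => ∑ j, W i j) - W

/-! The quadratic form of `L(W) + D` is `½ Σᵢⱼ Wᵢⱼ (xᵢ - xⱼ)² + Σᵢ dᵢ xᵢ²`, a sum of nonnegative
terms. If it vanishes, `x` is constant along every positive-weight edge, hence constant by
connectivity, and zero at a vertex with `dᵢ > 0`; so `x = 0`. -/

open Matrix

theorem Matrix.IsSymm.two_mul_dotProduct_diagonal_sum_sub_mulVec {ι R : Type*} [Fintype ι]
    [DecidableEq ι] [CommRing R] {W : Matrix ι ι R} (hW : W.IsSymm) (x : ι → R) :
    2 * (x ⬝ᵥ (diagonal (fun i => ∑ j, W i j) - W) *ᵥ x) =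
      ∑ i, ∑ j, W i j * (x i - x j) ^ 2 := by
  have hswap : ∑ i, ∑ j, W i j * x j ^ 2 = ∑ i, ∑ j, W i j * x i ^ 2 := by
    rw [Finset.sum_comm]
    simp only [hW.apply]
  have hexpand : ∑ i, ∑ j, W i j * (x i - x j) ^ 2 =
      ∑ i, ∑ j, W i j * x i ^ 2 + ∑ i, ∑ j, W i j * x j ^ 2 -
        2 * ∑ i, ∑ j, x i * (W i j * x j) := by
    simp only [Finset.mul_sum, ← Finset.sum_add_distrib, ← Finset.sum_sub_distrib]
    exact Fintype.sum_congr _ _ fun i => Fintype.sum_congr _ _ fun j => by ring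
  have hdiag : x ⬝ᵥ diagonal (fun i => ∑ j, W i j) *ᵥ x = ∑ i, ∑ j, W i j * x i ^ 2 := by
    simp only [dotProduct, mulVec_diagonal, Finset.sum_mul, Finset.mul_sum]
    exact Fintype.sum_congr _ _ fun i => Fintype.sum_congr _ _ fun j => by ring
  have hoff : x ⬝ᵥ W *ᵥ x = ∑ i, ∑ j, x i * (W i j * x j) := by
    simp only [dotProduct, mulVec, Finset.mul_sum]
  rw [hexpand, hswap, sub_mulVec, dotProduct_sub, hdiag, hoff]
  ring

theorem WeightConnected.apply_eq_of_forall_pos {n : ℕ} {W : Matrix (Fin n) (Fin n) ℝ}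
    (hW : WeightConnected W) {α : Type*} {f : Fin n → α}
    (hf : ∀ i j, 0 < W i j → f i = f j) (i j : Fin n) : f i = f j := by
  rcases eq_or_ne i j with rfl | hij
  · rfl
  obtain ⟨k, v, rfl, rfl, hv⟩ := hW i j hij
  have hpath : ∀ t : Fin (k + 1), f (v t) = f (v 0) := by
    intro t
    induction t using Fin.induction with
    | zero => rfl
    | succ t ih => rw [← hf _ _ (hv t), ih]
  exact (hpath _).symm

theorem two_mul_dotProduct_graphLaplacian_add_diagonal_mulVec {n : ℕ}
    {W : Matrix (Fin n) (Fin n) ℝ} (hW : W.IsSymm) (d x : Fin n → ℝ) :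
    2 * (x ⬝ᵥ (graphLaplacian W + diagonal d) *ᵥ x) =
      ∑ i, ∑ j, W i j * (x i - x j) ^ 2 + 2 * ∑ i, d i * x i ^ 2 := by
  rw [add_mulVec, dotProduct_add, mul_add, graphLaplacian,
    hW.two_mul_dotProduct_diagonal_sum_sub_mulVec]
  simp only [dotProduct, mulVec_diagonal]
  exact congrArg _ (congrArg _ (Fintype.sum_congr _ _ fun i => by ring))

theorem dotProduct_graphLaplacian_add_diagonal_mulVec_pos {n : ℕ}
    {W : Matrix (Fin n) (Fin n) ℝ} (hsymm : W.IsSymm) (hnonneg : ∀ i j, 0 ≤ W i j)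
    (hconn : WeightConnected W) {d : Fin n → ℝ} (hd : ∀ i, 0 ≤ d i) (hd' : ∃ i, 0 < d i)
    {x : Fin n → ℝ} (hx : x ≠ 0) : 0 < x ⬝ᵥ (graphLaplacian W + diagonal d) *ᵥ x := by
  have hform := two_mul_dotProduct_graphLaplacian_add_diagonal_mulVec hsymm d x
  have hedge_nonneg : ∀ i j, 0 ≤ W i j * (x i - x j) ^ 2 := fun i j =>
    mul_nonneg (hnonneg i j) (sq_nonneg _)
  have hvertex_nonneg : ∀ i, 0 ≤ d i * x i ^ 2 := fun i => mul_nonneg (hd i) (sq_nonneg _)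
  have hrow_nonneg : ∀ i, 0 ≤ ∑ j, W i j * (x i - x j) ^ 2 := fun i =>
    Finset.sum_nonneg fun j _ => hedge_nonneg i j
  have hedges := Finset.sum_nonneg fun i (_ : i ∈ Finset.univ) => hrow_nonneg i
  have hvertices := Finset.sum_nonneg fun i (_ : i ∈ Finset.univ) => hvertex_nonneg i
  by_contra hle
  have hedges_zero : ∑ i, ∑ j, W i j * (x i - x j) ^ 2 = 0 := by linarith [not_lt.mp hle]
  have hvertices_zero : ∑ i, d i * x i ^ 2 = 0 := by linarith [not_lt.mp hle]
  have hconst : ∀ i j, x i = x j := hconn.apply_eq_of_forall_pos fun i j hij => by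
    have hrow := (Finset.sum_eq_zero_iff_of_nonneg fun i _ => hrow_nonneg i).1 hedges_zero i
      (Finset.mem_univ i)
    have hterm := (Finset.sum_eq_zero_iff_of_nonneg fun j _ => hedge_nonneg i j).1 hrow j
      (Finset.mem_univ j)
    simpa [hij.ne', sub_eq_zero] using hterm
  obtain ⟨i₀, hi₀⟩ := hd'
  have hx₀ : x i₀ = 0 := by
    have hterm := (Finset.sum_eq_zero_iff_of_nonneg fun i _ => hvertex_nonneg i).1
      hvertices_zero i₀ (Finset.mem_univ i₀)
    simpa [hi₀.ne'] using hterm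
  exact hx (funext fun i => (hconst i i₀).trans hx₀)

theorem Matrix.PosDef.pos_of_mulVec_eq_smul {ι : Type*} [Fintype ι] {M : Matrix ι ι ℝ}
    (hM : M.PosDef) {μ : ℝ} {v : ι → ℝ} (hv : v ≠ 0) (h : M *ᵥ v = μ • v) : 0 < μ := by
  have hpos := hM.dotProduct_mulVec_pos hv
  rw [h, dotProduct_smul, smul_eq_mul, star_trivial] at hpos
  exact pos_of_mul_pos_left hpos (dotProduct_self_star_nonneg v)

theorem laplacian_plus_diagonal_posDef_general (n : ℕ)
    (W : Matrix (Fin n) (Fin n) ℝ) (hsymm : W.IsSymm)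
    (hnonneg : ∀ i j, 0 ≤ W i j)
    (hconn : WeightConnected W)
    (d : Fin n → ℝ) (hd : ∀ i, 0 ≤ d i) (hd' : ∃ i, 0 < d i) :
    (graphLaplacian W + Matrix.diagonal d).PosDef ∧
      IsUnit (graphLaplacian W + Matrix.diagonal d) ∧
      ∀ (μ : ℝ) (v : Fin n → ℝ), v ≠ 0 →
        (graphLaplacian W + Matrix.diagonal d).mulVec v = μ • v → 0 < μ := by
  have hherm : (graphLaplacian W + diagonal d).IsHermitian :=
    isHermitian_iff_isSymm.2 (((isSymm_diagonal _).sub hsymm).add (isSymm_diagonal d))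
  have hpd : (graphLaplacian W + diagonal d).PosDef := .of_dotProduct_mulVec_pos hherm
    fun x hx => by
      simpa using dotProduct_graphLaplacian_add_diagonal_mulVec_pos hsymm hnonneg hconn hd hd' hx
  exact ⟨hpd, hpd.isUnit, fun μ v hv h => hpd.pos_of_mulVec_eq_smul hv h⟩

/-- For a connected weighted graph on `n ≥ 1` vertices with Laplacian
`L(W)` and a nonnegative diagonal matrix `D` with at least one strictly positive
entry, the matrix `L(W) + D` is symmetric positive definite; in particular it is
invertible and all its eigenvalues are strictly positive. -/
theorem laplacian_plus_diagonal_posDef (n : ℕ) (hn : 1 ≤ n)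
    (W : Matrix (Fin n) (Fin n) ℝ) (hsymm : W.IsSymm)
    (hnonneg : ∀ i j, 0 ≤ W i j) (hdiag : ∀ i, W i i = 0)
    (hconn : WeightConnected W)
    (d : Fin n → ℝ) (hd : ∀ i, 0 ≤ d i) (hd' : ∃ i, 0 < d i) :
    (graphLaplacian W + Matrix.diagonal d).PosDef ∧
      IsUnit (graphLaplacian W + Matrix.diagonal d) ∧
      ∀ (μ : ℝ) (v : Fin n → ℝ), v ≠ 0 →
        (graphLaplacian W + Matrix.diagonal d).mulVec v = μ • v → 0 < μ :=
  laplacian_plus_diagonal_posDef_general n W hsymm hnonneg hconn d hd hd'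
end
end

section
/- Let n ≥ 1 and let W be an n×n real symmetric matrix with nonnegative entries and zero diagonal such that the weighted graph determined by W is connected, with weighted graph Laplacian L(W). Let C be an n×n diagonal matrix with nonnegative diagonal entries, let α ≥ 0 be real, and suppose either α > 0 or some diagonal entry of C is strictly positive. Then the matrix M = −(L(W) + C + α·I) is invertible and every eigenvalue of M is strictly negative (equivalently, −M is symmetric positive definite). -/
open scoped Matrix

noncomputable section

/-!
For symmetric nonnegative `W` one has `2 xᵀ L(W) x = ∑ᵢⱼ Wᵢⱼ (xᵢ - xⱼ)²`, so `L(W)` is positive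
semidefinite, and on a connected graph its quadratic form vanishes only on constant vectors.
Adding `C + αI` keeps semidefiniteness. If `α > 0` the sum is definite at once; otherwise a vector
on which the whole form vanishes is constant and also vanishes at an index with `cᵢ > 0`, hence is
zero. Invertibility and negativity of the eigenvalues of `M` follow from `-M` being positive
definite.
-/

open Matrix

lemma Matrix.PosDef.pos_of_mulVec_eq_smul_s16 {ι R : Type*} [Fintype ι] [CommRing R] [LinearOrder R]
    [IsStrictOrderedRing R] [StarRing R] [StarOrderedRing R] {A : Matrix ι ι R} (hA : A.PosDef)
    {μ : R} {x : ι → R} (hx : x ≠ 0) (hAx : A *ᵥ x = μ • x) : 0 < μ := by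
  have h := hA.dotProduct_mulVec_pos hx
  rw [hAx, dotProduct_smul, smul_eq_mul] at h
  exact pos_of_mul_pos_left h (dotProduct_star_self_nonneg x)

lemma WeightConnected.apply_eq {n : ℕ} {W : Matrix (Fin n) (Fin n) ℝ} {β : Type*}
    (hconn : WeightConnected W) {f : Fin n → β} (hf : ∀ i j, 0 < W i j → f i = f j) (i j : Fin n) :
    f i = f j := by
  rcases eq_or_ne i j with rfl | hij
  · rfl
  obtain ⟨k, v, rfl, rfl, hv⟩ := hconn i j hij
  suffices ∀ t, f (v 0) = f (v t) from this _
  intro t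
  induction t using Fin.induction with
  | zero => rfl
  | succ t ih => exact ih.trans (hf _ _ (hv t))

section graphLaplacian

variable {n : ℕ} {W : Matrix (Fin n) (Fin n) ℝ}

lemma graphLaplacian_isHermitian (hW : W.IsSymm) : (graphLaplacian W).IsHermitian :=
  isHermitian_iff_isSymm.mpr ((isSymm_diagonal _).sub hW)

lemma two_mul_dotProduct_graphLaplacian_mulVec (hW : W.IsSymm) (x : Fin n → ℝ) :
    2 * (x ⬝ᵥ graphLaplacian W *ᵥ x) = ∑ i, ∑ j, W i j * (x i - x j) ^ 2 := by
  have hswap : ∑ i, ∑ j, W i j * x j ^ 2 = ∑ i, ∑ j, W i j * x i ^ 2 := by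
    rw [Finset.sum_comm]
    simp only [hW.apply]
  have hquad : x ⬝ᵥ graphLaplacian W *ᵥ x
      = ∑ i, ∑ j, W i j * x i ^ 2 - ∑ i, ∑ j, W i j * (x i * x j) := by
    rw [graphLaplacian, sub_mulVec, dotProduct_sub]
    simp only [dotProduct, mulVec_diagonal]
    simp only [mulVec, dotProduct, Finset.mul_sum, Finset.sum_mul]
    congr 1 <;> exact Finset.sum_congr rfl fun i _ => Finset.sum_congr rfl fun j _ => by ring
  calc 2 * (x ⬝ᵥ graphLaplacian W *ᵥ x)
      = ∑ i, ∑ j, W i j * x i ^ 2 + ∑ i, ∑ j, W i j * x j ^ 2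
        - 2 * ∑ i, ∑ j, W i j * (x i * x j) := by rw [hquad, hswap]; ring
    _ = ∑ i, ∑ j, W i j * (x i - x j) ^ 2 := by
      simp only [← Finset.sum_add_distrib, Finset.mul_sum, ← Finset.sum_sub_distrib]
      exact Finset.sum_congr rfl fun i _ => Finset.sum_congr rfl fun j _ => by ring

lemma posSemidef_graphLaplacian (hW : W.IsSymm) (hW₀ : ∀ i j, 0 ≤ W i j) :
    (graphLaplacian W).PosSemidef := by
  refine .of_dotProduct_mulVec_nonneg (graphLaplacian_isHermitian hW) fun x => ?_
  have := two_mul_dotProduct_graphLaplacian_mulVec hW x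
  have : 0 ≤ ∑ i, ∑ j, W i j * (x i - x j) ^ 2 :=
    Finset.sum_nonneg fun i _ => Finset.sum_nonneg fun j _ => mul_nonneg (hW₀ i j) (sq_nonneg _)
  rw [star_trivial]
  linarith

lemma apply_eq_of_dotProduct_graphLaplacian_mulVec_eq_zero (hW : W.IsSymm)
    (hW₀ : ∀ i j, 0 ≤ W i j) {x : Fin n → ℝ} (hx : x ⬝ᵥ graphLaplacian W *ᵥ x = 0) {i j : Fin n}
    (hij : 0 < W i j) : x i = x j := by
  have hterm_nonneg : ∀ i j, 0 ≤ W i j * (x i - x j) ^ 2 := fun i j =>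
    mul_nonneg (hW₀ i j) (sq_nonneg _)
  have hsum : ∑ i, ∑ j, W i j * (x i - x j) ^ 2 = 0 := by
    rw [← two_mul_dotProduct_graphLaplacian_mulVec hW, hx, mul_zero]
  have hrow := congrFun ((Fintype.sum_eq_zero_iff_of_nonneg fun i =>
    Fintype.sum_nonneg (hterm_nonneg i)).mp hsum) i
  have hterm := congrFun ((Fintype.sum_eq_zero_iff_of_nonneg (hterm_nonneg i)).mp hrow) j
  simpa [hij.ne', sub_eq_zero] using hterm

lemma posDef_graphLaplacian_add_diagonal (hW : W.IsSymm) (hW₀ : ∀ i j, 0 ≤ W i j)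
    (hconn : WeightConnected W) {d : Fin n → ℝ} (hd : 0 ≤ d) (hd_pos : ∃ i, 0 < d i) :
    (graphLaplacian W + diagonal d).PosDef := by
  have hL := posSemidef_graphLaplacian hW hW₀
  have hD : (diagonal d).PosSemidef := .diagonal hd
  refine .of_dotProduct_mulVec_pos (hL.add hD).isHermitian fun x hx => ?_
  have hLx := hL.dotProduct_mulVec_nonneg x
  have hDx := hD.dotProduct_mulVec_nonneg x
  rw [add_mulVec, dotProduct_add]
  refine lt_of_le_of_ne (add_nonneg hLx hDx) fun hzero => hx ?_
  have hL0 : star x ⬝ᵥ graphLaplacian W *ᵥ x = 0 := by linarith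
  have hD0 : diagonal d *ᵥ x = 0 := (hD.dotProduct_mulVec_zero_iff x).mp (by linarith)
  obtain ⟨i, hi⟩ := hd_pos
  have hxi : x i = 0 := by simpa [mulVec_diagonal, hi.ne'] using congrFun hD0 i
  ext j
  rw [star_trivial] at hL0
  rw [hconn.apply_eq (fun _ _ => apply_eq_of_dotProduct_graphLaplacian_mulVec_eq_zero hW hW₀ hL0)
    j i, hxi, Pi.zero_apply]

end graphLaplacian

theorem neg_laplacian_system_invertible_general (n : ℕ)
    (W : Matrix (Fin n) (Fin n) ℝ) (hsymm : W.IsSymm)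
    (hnonneg : ∀ i j, 0 ≤ W i j)
    (hconn : WeightConnected W)
    (cdiag : Fin n → ℝ) (hc : ∀ i, 0 ≤ cdiag i) (α : ℝ) (hα : 0 ≤ α)
    (hpos : 0 < α ∨ ∃ i, 0 < cdiag i)
    (M : Matrix (Fin n) (Fin n) ℝ)
    (hM : M = -(graphLaplacian W + Matrix.diagonal cdiag + α • (1 : Matrix (Fin n) (Fin n) ℝ))) :
    IsUnit M ∧
      (∀ (μ : ℝ) (v : Fin n → ℝ), v ≠ 0 → M.mulVec v = μ • v → μ < 0) ∧
      (-M).PosDef := by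
  have hpd : (-M).PosDef := by
    rw [hM, neg_neg]
    rcases hpos with hα_pos | hc_pos
    · exact .posSemidef_add ((posSemidef_graphLaplacian hsymm hnonneg).add (.diagonal hc))
        (PosDef.one.smul hα_pos)
    · exact (posDef_graphLaplacian_add_diagonal hsymm hnonneg hconn hc hc_pos).add_posSemidef
        (PosSemidef.one.smul hα)
  refine ⟨by simpa using hpd.isUnit.neg, fun μ v hv hMv => ?_, hpd⟩
  exact neg_pos.mp (hpd.pos_of_mulVec_eq_smul_s16 hv (by rw [neg_mulVec, hMv, neg_smul]))

/-- For a connected weighted graph on `n ≥ 1` vertices with Laplacian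
`L(W)`, a nonnegative diagonal matrix `C`, and `α ≥ 0` with either `α > 0` or some
diagonal entry of `C` strictly positive, the matrix `M = −(L(W) + C + α·I)` is
invertible with all eigenvalues strictly negative; equivalently `−M` is symmetric
positive definite. -/
theorem neg_laplacian_system_invertible (n : ℕ) (hn : 1 ≤ n)
    (W : Matrix (Fin n) (Fin n) ℝ) (hsymm : W.IsSymm)
    (hnonneg : ∀ i j, 0 ≤ W i j) (hdiag : ∀ i, W i i = 0)
    (hconn : WeightConnected W)
    (cdiag : Fin n → ℝ) (hc : ∀ i, 0 ≤ cdiag i) (α : ℝ) (hα : 0 ≤ α)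
    (hpos : 0 < α ∨ ∃ i, 0 < cdiag i)
    (M : Matrix (Fin n) (Fin n) ℝ)
    (hM : M = -(graphLaplacian W + Matrix.diagonal cdiag + α • (1 : Matrix (Fin n) (Fin n) ℝ))) :
    IsUnit M ∧
      (∀ (μ : ℝ) (v : Fin n → ℝ), v ≠ 0 → M.mulVec v = μ • v → μ < 0) ∧
      (-M).PosDef :=
  neg_laplacian_system_invertible_general n W hsymm hnonneg hconn cdiag hc α hα hpos M hM
end
end

section
/- Let Ω ⊆ ℝ² be a bounded open set with nonempty boundary ∂Ω, and let E(P) = dist(P, ∂Ω) denote the Euclidean distance from P to ∂Ω. Suppose P ∈ Ω has a unique nearest point Q on ∂Ω, i.e., ‖P − Q‖ = E(P) and ‖P − Q'‖ > E(P) for every Q' ∈ ∂Ω with Q' ≠ Q. Then E is differentiable at P and ∇E(P) = (P − Q)/‖P − Q‖, the unit vector pointing from Q toward P. -/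
open Metric Set
open scoped RealInnerProductSpace

noncomputable section

private lemma inner_unit_le (b a : E2) : ⟪‖b‖⁻¹ • b, a⟫ ≤ ‖a‖ := by
  rcases eq_or_ne b 0 with rfl | hb
  · simp
  · have hb' : ‖b‖ ≠ 0 := norm_ne_zero_iff.2 hb
    calc ⟪‖b‖⁻¹ • b, a⟫ ≤ ‖‖b‖⁻¹ • b‖ * ‖a‖ := real_inner_le_norm _ _
      _ = ‖a‖ := by
        rw [norm_smul, norm_inv, norm_norm, inv_mul_cancel₀ hb', one_mul]

private lemma inner_unit_self (b : E2) (hb : b ≠ 0) : ⟪‖b‖⁻¹ • b, b⟫ = ‖b‖ := by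
  have hb' : ‖b‖ ≠ 0 := norm_ne_zero_iff.2 hb
  rw [real_inner_smul_left, real_inner_self_eq_norm_mul_norm]
  field_simp

private lemma inner_lower (a b : E2) (hb : b ≠ 0) :
    ⟪‖b‖⁻¹ • b, a - b⟫ ≤ ‖a‖ - ‖b‖ := by
  rw [inner_sub_right, inner_unit_self b hb]
  linarith [inner_unit_le b a]

private lemma inner_upper (a b : E2) (ha : a ≠ 0) :
    ‖a‖ - ‖b‖ ≤ ⟪‖a‖⁻¹ • a, a - b⟫ := by
  rw [inner_sub_right, inner_unit_self a ha]
  linarith [inner_unit_le a b]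

private lemma unit_sub_le (a b : E2) (ha : a ≠ 0) (hb : b ≠ 0) :
    ‖‖a‖⁻¹ • a - ‖b‖⁻¹ • b‖ ≤ 2 * ‖a - b‖ / ‖b‖ := by
  have ha' : (0:ℝ) < ‖a‖ := norm_pos_iff.2 ha
  have hb' : (0:ℝ) < ‖b‖ := norm_pos_iff.2 hb
  have hsplit : ‖a‖⁻¹ • a - ‖b‖⁻¹ • b = (‖a‖⁻¹ - ‖b‖⁻¹) • a + ‖b‖⁻¹ • (a - b) := by
    rw [sub_smul, smul_sub]; abel
  have h1 : ‖(‖a‖⁻¹ - ‖b‖⁻¹) • a‖ ≤ ‖a - b‖ / ‖b‖ := by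
    rw [norm_smul, Real.norm_eq_abs, inv_sub_inv ha'.ne' hb'.ne', abs_div,
      abs_of_pos (mul_pos ha' hb'), abs_sub_comm]
    have h2 : |‖a‖ - ‖b‖| ≤ ‖a - b‖ := abs_norm_sub_norm_le a b
    rw [div_mul_eq_mul_div, mul_comm]
    rw [div_le_div_iff₀ (mul_pos ha' hb') hb']
    calc ‖a‖ * |‖a‖ - ‖b‖| * ‖b‖ ≤ ‖a‖ * ‖a - b‖ * ‖b‖ := by
          have := mul_le_mul_of_nonneg_left h2 ha'.le
          nlinarith
      _ = ‖a - b‖ * (‖a‖ * ‖b‖) := by ring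
  have h3 : ‖‖b‖⁻¹ • (a - b)‖ = ‖a - b‖ / ‖b‖ := by
    rw [norm_smul, Real.norm_eq_abs, abs_inv, abs_of_pos hb', inv_mul_eq_div]
  calc ‖‖a‖⁻¹ • a - ‖b‖⁻¹ • b‖ ≤ ‖(‖a‖⁻¹ - ‖b‖⁻¹) • a‖ + ‖‖b‖⁻¹ • (a - b)‖ := by
        rw [hsplit]; exact norm_add_le _ _
    _ ≤ ‖a - b‖ / ‖b‖ + ‖a - b‖ / ‖b‖ := by rw [h3]; linarith
    _ = 2 * ‖a - b‖ / ‖b‖ := by ring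

/-- If `P` in a bounded open set `Ω ⊆ ℝ²` has a unique nearest
boundary point `Q`, then the distance-to-the-boundary function
`E(x) = dist(x, ∂Ω)` is differentiable at `P` with gradient
`∇E(P) = (P − Q)/‖P − Q‖`. -/
theorem distance_function_gradient (Ω : Set E2) (hΩ : IsOpen Ω)
    (hb : Bornology.IsBounded Ω) (hfr : (frontier Ω).Nonempty)
    (P Q : E2) (hP : P ∈ Ω) (hQ : Q ∈ frontier Ω)
    (hnear : dist P Q = Metric.infDist P (frontier Ω))
    (huniq : ∀ Q' ∈ frontier Ω, Q' ≠ Q → Metric.infDist P (frontier Ω) < dist P Q') :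
    HasGradientAt (fun x => Metric.infDist x (frontier Ω))
      (‖P - Q‖⁻¹ • (P - Q)) P := by
  have hPQ : P ≠ Q := by
    rintro rfl
    exact hQ.2 (by rwa [hΩ.interior_eq])
  obtain ⟨d, hd'⟩ : ∃ d, d = dist P Q := ⟨_, rfl⟩
  have hd : 0 < d := hd' ▸ dist_pos.2 hPQ
  have hcomp : IsCompact (frontier Ω) := by
    have hbd : Bornology.IsBounded (frontier Ω) :=
      hb.closure.subset frontier_subset_closure
    exact Metric.isCompact_of_isClosed_isBounded isClosed_frontier hbd
  -- quantitative convergence of nearest points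
  have hQctl : ∀ ε > (0:ℝ), ∃ δ > (0:ℝ), ∀ x : E2, dist x P < δ →
      ∀ Q' ∈ frontier Ω, Metric.infDist x (frontier Ω) = dist x Q' → dist Q' Q < ε := by
    intro ε hε
    by_cases hK : (frontier Ω \ ball Q ε).Nonempty
    · obtain ⟨y, hyK, hymin⟩ := (hcomp.diff isOpen_ball).exists_isMinOn hK
        (Continuous.dist continuous_const continuous_id).continuousOn (f := fun z => dist P z)
      have hyQ : y ≠ Q := by
        rintro rfl
        exact hyK.2 (mem_ball_self hε)
      have hm : d < dist P y := by
        rw [hd', hnear]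
        exact huniq y hyK.1 hyQ
      refine ⟨(dist P y - d)/2, by linarith, ?_⟩
      intro x hx Q' hQ'f hQ'd
      by_contra hcon
      push_neg at hcon
      have hQK : Q' ∈ frontier Ω \ ball Q ε := ⟨hQ'f, by simpa [mem_ball, not_lt] using hcon⟩
      have h1 : dist P Q' ≤ dist P x + dist x Q' := dist_triangle _ _ _
      have h2 : dist x Q' ≤ dist x Q := by
        rw [← hQ'd]; exact infDist_le_dist_of_mem hQ
      have h3 : dist x Q ≤ dist x P + d := by rw [hd']; exact dist_triangle _ _ _
      have h4 : dist P y ≤ dist P Q' := hymin hQK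
      have h5 : dist P x = dist x P := dist_comm _ _
      linarith
    · refine ⟨1, one_pos, ?_⟩
      intro x _ Q' hQ'f _
      by_contra hcon
      push_neg at hcon
      exact hK ⟨Q', hQ'f, by simpa [mem_ball, not_lt] using hcon⟩
  rw [hasGradientAt_iff_isLittleO, Asymptotics.isLittleO_iff]
  intro c hc
  obtain ⟨δ₀, hδ₀, hδ⟩ := hQctl (c * d / 2) (by positivity)
  rw [Metric.eventually_nhds_iff]
  refine ⟨min δ₀ (min (d/2) (c*d/2)), by positivity, ?_⟩
  intro x hx
  have hx₀ : dist x P < δ₀ := lt_of_lt_of_le hx (min_le_left _ _)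
  have hx₁ : dist x P < d/2 := lt_of_lt_of_le hx ((min_le_right _ _).trans (min_le_left _ _))
  have hx₂ : dist x P < c*d/2 := lt_of_lt_of_le hx ((min_le_right _ _).trans (min_le_right _ _))
  obtain ⟨Qx, hQxf, hQxd⟩ := hcomp.exists_infDist_eq_dist hfr x
  have hQxQ : dist Qx Q < c * d / 2 := hδ x hx₀ Qx hQxf hQxd
  have hPQnorm : ‖P - Q‖ = d := by rw [hd', dist_eq_norm]
  have hPQx_d : d ≤ dist P Qx := by
    rw [hd', hnear]; exact infDist_le_dist_of_mem hQxf
  have hPQx : P - Qx ≠ 0 := by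
    rw [sub_ne_zero]
    intro h
    rw [h] at hPQx_d
    simp at hPQx_d
    linarith
  have hxQ : x - Q ≠ 0 := by
    rw [sub_ne_zero]
    intro h
    have h6 : d ≤ dist x P := le_of_eq (by rw [hd', ← h, dist_comm])
    linarith
  have hPQ0 : P - Q ≠ 0 := sub_ne_zero.2 hPQ
  -- lower bound
  set u : E2 := ‖P - Q‖⁻¹ • (P - Q) with hu
  set v : E2 := ‖P - Qx‖⁻¹ • (P - Qx) with hv
  set w : E2 := ‖x - Q‖⁻¹ • (x - Q) with hw
  have hlow : ⟪v, x - P⟫ ≤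
      Metric.infDist x (frontier Ω) - Metric.infDist P (frontier Ω) := by
    have h1 : Metric.infDist x (frontier Ω) = ‖x - Qx‖ := by
      rw [hQxd, dist_eq_norm]
    have h2 : Metric.infDist P (frontier Ω) ≤ ‖P - Qx‖ := by
      rw [← dist_eq_norm]; exact infDist_le_dist_of_mem hQxf
    have h3 := inner_lower (x - Qx) (P - Qx) hPQx
    have h4 : (x - Qx) - (P - Qx) = x - P := by abel
    rw [h4] at h3
    rw [h1]
    exact h3.trans (by linarith)
  have hupp : Metric.infDist x (frontier Ω) - Metric.infDist P (frontier Ω) ≤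
      ⟪w, x - P⟫ := by
    have h1 : Metric.infDist x (frontier Ω) ≤ ‖x - Q‖ := by
      rw [← dist_eq_norm]; exact infDist_le_dist_of_mem hQ
    have h2 : Metric.infDist P (frontier Ω) = ‖P - Q‖ := by
      rw [← hnear, ← hd', hPQnorm]
    have h3 := inner_upper (x - Q) (P - Q) hxQ
    have h4 : (x - Q) - (P - Q) = x - P := by abel
    rw [h4] at h3
    rw [h2]
    linarith
  -- unit vector estimates
  have hvu : ‖v - u‖ ≤ c := by
    have h := unit_sub_le (P - Qx) (P - Q) hPQx hPQ0
    have h4 : (P - Qx) - (P - Q) = Q - Qx := by abel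
    rw [h4] at h
    have h5 : ‖Q - Qx‖ = dist Qx Q := by rw [← dist_eq_norm, dist_comm]
    calc ‖v - u‖ ≤ 2 * ‖Q - Qx‖ / ‖P - Q‖ := h
      _ = 2 * dist Qx Q / d := by rw [h5, hPQnorm]
      _ ≤ 2 * (c * d / 2) / d := by gcongr
      _ = c := by field_simp
  have hwu : ‖w - u‖ ≤ c := by
    have h := unit_sub_le (x - Q) (P - Q) hxQ hPQ0
    have h4 : (x - Q) - (P - Q) = x - P := by abel
    rw [h4] at h
    have h5 : ‖x - P‖ = dist x P := (dist_eq_norm _ _).symm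
    calc ‖w - u‖ ≤ 2 * ‖x - P‖ / ‖P - Q‖ := h
      _ = 2 * dist x P / d := by rw [h5, hPQnorm]
      _ ≤ 2 * (c * d / 2) / d := by gcongr
      _ = c := by field_simp
  -- assemble
  have hnormxP : ‖x - P‖ = dist x P := (dist_eq_norm _ _).symm
  have hb1 : |⟪v - u, x - P⟫| ≤ c * ‖x - P‖ := by
    calc |⟪v - u, x - P⟫| ≤ ‖v - u‖ * ‖x - P‖ := abs_real_inner_le_norm _ _
      _ ≤ c * ‖x - P‖ := mul_le_mul_of_nonneg_right hvu (norm_nonneg _)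
  have hb2 : |⟪w - u, x - P⟫| ≤ c * ‖x - P‖ := by
    calc |⟪w - u, x - P⟫| ≤ ‖w - u‖ * ‖x - P‖ := abs_real_inner_le_norm _ _
      _ ≤ c * ‖x - P‖ := mul_le_mul_of_nonneg_right hwu (norm_nonneg _)
  rw [inner_sub_left] at hb1 hb2
  have habs1 := abs_le.1 hb1
  have habs2 := abs_le.1 hb2
  rw [Real.norm_eq_abs, abs_le]
  constructor
  · linarith [hlow]
  · linarith [hupp]
end
end
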